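/- arXiv:1802.05791 — 2 statements merged into one kernel-verified Lean document; each statement's English description precedes it below -/
import Mathlib

section
/- Let f : ℕ → ℕ be finitely supported and δ > 0. Then the sparsified function f̃ is nondecreasing, and its discrete derivative F, defined by F(0) = f̃(0) and F(x) = f̃(x) − f̃(x−1) for x > 0, satisfies ΣF(x) = f̃(x) for all x; consequently F is a (1+δ)-sum approximation of f. -/
open Classical

/-- Prefix sum: `psum f x = ∑_{y ≤ x} f y`. -/
def psum (f : ℕ → ℕ) (x : ℕ) : ℕ := ∑ y ∈ Finset.range (x + 1), f y

/-- Threshold sequence: `r 0 = 0`, `r (i+1) = max (r i + 1) ⌊(1+δ)·r i⌋`. -/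
noncomputable def rseq (δ : ℝ) : ℕ → ℕ
  | 0 => 0
  | i + 1 => max (rseq δ i + 1) ⌊(1 + δ) * (rseq δ i : ℝ)⌋₊

/-- The set of breakpoints: for every index `i` such that some `x` has
`Σf(x) ≥ r_i`, the least such `x` is a breakpoint. -/
noncomputable def breakpoints (f : ℕ → ℕ) (δ : ℝ) : Set ℕ :=
  {b | ∃ i, (∃ x, rseq δ i ≤ psum f x) ∧ b = sInf {x | rseq δ i ≤ psum f x}}

/-- The sparsified function `f̃`: if some breakpoint lies strictly above `x`,
`f̃(x) = Σf(succ(x) - 1)` where `succ(x)` is the least breakpoint `> x`;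
otherwise `f̃(x) = M`, the total sum of `f`. -/
noncomputable def sparsified (f : ℕ →₀ ℕ) (δ : ℝ) (x : ℕ) : ℕ :=
  if (breakpoints f δ ∩ Set.Ioi x).Nonempty then
    psum f (sInf (breakpoints f δ ∩ Set.Ioi x) - 1)
  else ∑ y ∈ f.support, f y

/-- The discrete derivative of the sparsified function:
`F(0) = f̃(0)` and `F(x) = f̃(x) − f̃(x−1)` for `x > 0`. -/
noncomputable def sparsifiedDeriv (f : ℕ →₀ ℕ) (δ : ℝ) (x : ℕ) : ℕ :=
  if x = 0 then sparsified f δ 0 else sparsified f δ x - sparsified f δ (x - 1)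

/-! Let `s = Σf(x)` and let `i` be the index with `r_i ≤ s < r_{i+1}`. The breakpoint of
`r_{i+1}` lies above `x` and `Σf` stays below `r_{i+1}` just before it, so
`Σf(x) ≤ f̃(x) < r_{i+1}`. The recursion for `r` turns `f̃(x) < r_{i+1}` into
`f̃(x) ≤ max(r_i, (1+δ) r_i) ≤ (1+δ) s`. The identity `ΣF = f̃` is telescoping, which
needs `f̃` to be nondecreasing so that truncated subtraction loses nothing. -/

theorem psum_succ (f : ℕ → ℕ) (x : ℕ) : psum f (x + 1) = psum f x + f (x + 1) :=
  Finset.sum_range_succ f (x + 1)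

theorem psum_mono (f : ℕ → ℕ) : Monotone (psum f) := fun _ _ hab =>
  Finset.sum_le_sum_of_subset (Finset.range_subset_range.mpr (Nat.succ_le_succ hab))

theorem psum_le_sum_support (f : ℕ →₀ ℕ) (x : ℕ) : psum f x ≤ ∑ y ∈ f.support, f y :=
  Finset.sum_le_sum_of_ne_zero fun _ _ hy => Finsupp.mem_support_iff.mpr hy

theorem exists_psum_eq_sum_support (f : ℕ →₀ ℕ) : ∃ x, psum f x = ∑ y ∈ f.support, f y := by
  refine ⟨f.support.sup id, (Finset.sum_subset (fun y hy => ?_) fun y _ hy => ?_).symm⟩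
  · exact Finset.mem_range_succ_iff.mpr (Finset.le_sup (f := id) hy)
  · exact Finsupp.notMem_support_iff.mp hy

theorem psum_discreteDeriv {g : ℕ → ℕ} (hg : Monotone g) (x : ℕ) :
    psum (fun y => if y = 0 then g 0 else g y - g (y - 1)) x = g x := by
  induction x with
  | zero => simp [psum]
  | succ x ih =>
    rw [psum_succ, ih, if_neg x.succ_ne_zero, Nat.add_sub_cancel]
    exact Nat.add_sub_cancel' (hg x.le_succ)

theorem add_one_le_rseq_succ (δ : ℝ) (i : ℕ) : rseq δ i + 1 ≤ rseq δ (i + 1) := le_max_left _ _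

theorem exists_rseq_le_lt_rseq_succ (δ : ℝ) (s : ℕ) :
    ∃ i, rseq δ i ≤ s ∧ s < rseq δ (i + 1) := by
  induction s with
  | zero => exact ⟨0, le_rfl, add_one_le_rseq_succ δ 0⟩
  | succ s ih =>
    obtain ⟨i, hi, hs⟩ := ih
    rcases (Nat.succ_le_of_lt hs).lt_or_eq with hlt | heq
    · exact ⟨i, by omega, hlt⟩
    · exact ⟨i + 1, heq.ge, by have := add_one_le_rseq_succ δ (i + 1); omega⟩

theorem cast_le_of_lt_rseq_succ {δ : ℝ} (hδ : 0 ≤ δ) {a s i : ℕ} (ha : a < rseq δ (i + 1))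
    (hs : rseq δ i ≤ s) : (a : ℝ) ≤ (1 + δ) * s := by
  have hs' : (rseq δ i : ℝ) ≤ s := by exact_mod_cast hs
  rcases lt_max_iff.mp ha with hsucc | hfloor
  · have : (a : ℝ) ≤ s := by exact_mod_cast (Nat.lt_succ_iff.mp hsucc).trans hs
    nlinarith [(s.cast_nonneg : (0 : ℝ) ≤ s)]
  · nlinarith [Nat.lt_of_lt_floor hfloor]

section sparsified

variable (f : ℕ →₀ ℕ) (δ : ℝ)

theorem sparsified_le_sum_support (x : ℕ) : sparsified f δ x ≤ ∑ y ∈ f.support, f y := by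
  unfold sparsified
  split_ifs
  exacts [psum_le_sum_support f _, le_rfl]

theorem sparsified_monotone : Monotone (sparsified f δ) := by
  intro a b hab
  by_cases hb : (breakpoints f δ ∩ Set.Ioi b).Nonempty
  · have hsub : breakpoints f δ ∩ Set.Ioi b ⊆ breakpoints f δ ∩ Set.Ioi a :=
      fun z ⟨hz, hbz⟩ => ⟨hz, lt_of_le_of_lt hab hbz⟩
    rw [sparsified, if_pos (hb.mono hsub), sparsified, if_pos hb]
    exact psum_mono f (Nat.sub_le_sub_right (Nat.sInf_le (hsub (Nat.sInf_mem hb))) 1)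
  · rw [show sparsified f δ b = ∑ y ∈ f.support, f y from if_neg hb]
    exact sparsified_le_sum_support f δ a

theorem psum_le_sparsified (x : ℕ) : psum f x ≤ sparsified f δ x := by
  unfold sparsified
  split_ifs with h
  · exact psum_mono f (Nat.le_sub_one_of_lt (Set.mem_Ioi.mp (Nat.sInf_mem h).2))
  · exact psum_le_sum_support f x

theorem sparsified_le_psum_pred_of_mem_breakpoints {x b : ℕ} (hb : b ∈ breakpoints f δ)
    (hxb : x < b) : sparsified f δ x ≤ psum f (b - 1) := by
  have hne : (breakpoints f δ ∩ Set.Ioi x).Nonempty := ⟨b, hb, hxb⟩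
  rw [sparsified, if_pos hne]
  exact psum_mono f (Nat.sub_le_sub_right (Nat.sInf_le (Set.mem_inter hb hxb)) 1)

theorem sparsified_lt_rseq {x j : ℕ} (hx : psum f x < rseq δ j) :
    sparsified f δ x < rseq δ j := by
  by_cases hS : ∃ y, rseq δ j ≤ psum f y
  · obtain ⟨b, hb⟩ : ∃ b, b = sInf {y | rseq δ j ≤ psum f y} := ⟨_, rfl⟩
    have hmem : rseq δ j ≤ psum f b := hb ▸ Nat.sInf_mem hS
    have hxb : x < b := lt_of_not_ge fun hbx => hx.not_ge (hmem.trans (psum_mono f hbx))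
    calc sparsified f δ x ≤ psum f (b - 1) :=
          sparsified_le_psum_pred_of_mem_breakpoints f δ ⟨j, hS, hb⟩ hxb
      _ < rseq δ j := lt_of_not_ge fun hpred => by
          have := Nat.sInf_le (show b - 1 ∈ {y | rseq δ j ≤ psum f y} from hpred)
          omega
  · obtain ⟨y, hy⟩ := exists_psum_eq_sum_support f
    push Not at hS
    exact (sparsified_le_sum_support f δ x).trans_lt (hy ▸ hS y)

end sparsified

theorem sparsifiedDeriv_sum_approx (f : ℕ →₀ ℕ) (δ : ℝ) (hδ : 0 < δ) :
    Monotone (sparsified f δ) ∧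
    (∀ x, psum (sparsifiedDeriv f δ) x = sparsified f δ x) ∧
    (∀ x, psum f x ≤ psum (sparsifiedDeriv f δ) x ∧
      (psum (sparsifiedDeriv f δ) x : ℝ) ≤ (1 + δ) * psum f x) := by
  have hsum : ∀ x, psum (sparsifiedDeriv f δ) x = sparsified f δ x :=
    psum_discreteDeriv (sparsified_monotone f δ)
  refine ⟨sparsified_monotone f δ, hsum, fun x => ?_⟩
  rw [hsum]
  obtain ⟨i, hi, hlt⟩ := exists_rseq_le_lt_rseq_succ δ (psum f x)
  exact ⟨psum_le_sparsified f δ x,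
    cast_le_of_lt_rseq_succ hδ.le (sparsified_lt_rseq f δ hlt) hi⟩
end

section
/- Let A and B be disjoint finite index sets with weights w : A ∪ B → ℕ, and let ε > 0. If F is a (1+ε)-sum approximation of k_A and G is a (1+ε)-sum approximation of k_B, then the convolution F ∗ G is a (1+ε)²-sum approximation of k_{A ∪ B}. -/
/-- Convolution: `(f ∗ g)(w) = ∑_{x+y=w} f(x)·g(y)`. -/
def conv (f g : ℕ → ℕ) (w : ℕ) : ℕ := ∑ x ∈ Finset.range (w + 1), f x * g (w - x)

/-- `F` is a `(1+ε)`-sum approximation of `f`: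
`Σf(x) ≤ ΣF(x) ≤ (1+ε)·Σf(x)` for all `x`. -/
def IsSumApprox (ε : ℝ) (F f : ℕ → ℕ) : Prop :=
  ∀ x, (psum f x : ℝ) ≤ psum F x ∧ (psum F x : ℝ) ≤ (1 + ε) * psum f x

/-- Knapsack counting function: `knap S w x` is the number of subsets
`T ⊆ S` with total weight `∑_{i∈T} w i = x`. -/
def knap {ι : Type*} [DecidableEq ι] (S : Finset ι) (w : ι → ℕ) (x : ℕ) : ℕ :=
  (S.powerset.filter (fun T => ∑ i ∈ T, w i = x)).card

/-! Prefix sums of a convolution are prefix sums of one factor weighted by the other,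
`Σ(f ∗ g)(x) = ∑_{u ≤ x} f(u) · Σg(x - u)`, so bounds on `Σg` transfer to `Σ(f ∗ g)`; by
commutativity of `∗` the same holds for `Σf`, and the two approximation factors multiply.
Splitting a subset of `A ∪ B` into its parts in `A` and in `B` gives `k_{A ∪ B} = k_A ∗ k_B`. -/

open Finset

lemma conv_comm (f g : ℕ → ℕ) : conv f g = conv g f := by
  funext v
  rw [conv, ← sum_range_reflect]
  refine sum_congr rfl fun u hu => ?_
  have hu : u ≤ v := Nat.lt_succ_iff.mp (mem_range.mp hu)
  rw [show v + 1 - 1 - u = v - u by omega, Nat.sub_sub_self hu, mul_comm]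

lemma psum_conv (f g : ℕ → ℕ) (x : ℕ) :
    psum (conv f g) x = ∑ u ∈ range (x + 1), f u * psum g (x - u) := by
  have hswap : ∑ y ∈ range (x + 1), ∑ u ∈ range (y + 1), f u * g (y - u)
      = ∑ u ∈ range (x + 1), ∑ y ∈ Ico u (x + 1), f u * g (y - u) :=
    sum_comm' fun y u => by simp only [mem_range, mem_Ico]; omega
  simp only [psum, conv, hswap, mul_sum]
  refine sum_congr rfl fun u hu => ?_
  rw [sum_Ico_eq_sum_range, show x + 1 - u = x - u + 1 by have := mem_range.mp hu; omega]
  simp only [Nat.add_sub_cancel_left]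

lemma psum_conv_le_mul_psum_conv {f g g' : ℕ → ℕ} {c : ℝ}
    (h : ∀ y, (psum g y : ℝ) ≤ c * psum g' y) (x : ℕ) :
    (psum (conv f g) x : ℝ) ≤ c * psum (conv f g') x := by
  simp only [psum_conv, Nat.cast_sum, Nat.cast_mul, mul_sum]
  exact sum_le_sum fun u _ =>
    (mul_le_mul_of_nonneg_left (h _) (Nat.cast_nonneg _)).trans_eq (by ring)

lemma psum_conv_le_psum_conv {f f' g g' : ℕ → ℕ}
    (hf : ∀ y, (psum f y : ℝ) ≤ psum f' y) (hg : ∀ y, (psum g y : ℝ) ≤ psum g' y) (x : ℕ) :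
    (psum (conv f g) x : ℝ) ≤ psum (conv f' g') x := by
  calc (psum (conv f g) x : ℝ) ≤ psum (conv f g') x := by
        simpa using psum_conv_le_mul_psum_conv (c := 1) (by simpa using hg) x
    _ = psum (conv g' f) x := by rw [conv_comm]
    _ ≤ psum (conv g' f') x := by
        simpa using psum_conv_le_mul_psum_conv (c := 1) (by simpa using hf) x
    _ = psum (conv f' g') x := by rw [conv_comm]

lemma isSumApprox_conv {ε δ : ℝ} {F f G g : ℕ → ℕ} (hδ : 0 ≤ 1 + δ)
    (hF : IsSumApprox ε F f) (hG : IsSumApprox δ G g) :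
    IsSumApprox (ε + δ + ε * δ) (conv F G) (conv f g) := by
  refine fun x => ⟨psum_conv_le_psum_conv (fun y => (hF y).1) (fun y => (hG y).1) x, ?_⟩
  calc (psum (conv F G) x : ℝ) ≤ (1 + δ) * psum (conv F g) x :=
        psum_conv_le_mul_psum_conv (fun y => (hG y).2) x
    _ = (1 + δ) * psum (conv g F) x := by rw [conv_comm]
    _ ≤ (1 + δ) * ((1 + ε) * psum (conv g f) x) := by
        gcongr; exact psum_conv_le_mul_psum_conv (fun y => (hF y).2) x
    _ = (1 + (ε + δ + ε * δ)) * psum (conv f g) x := by rw [conv_comm]; ring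

lemma card_filter_powerset_union {ι : Type*} [DecidableEq ι] {A B : Finset ι}
    (hAB : Disjoint A B) (p : Finset ι → Prop) [DecidablePred p] :
    #{T ∈ (A ∪ B).powerset | p T} = #{PQ ∈ A.powerset ×ˢ B.powerset | p (PQ.1 ∪ PQ.2)} := by
  refine card_nbij' (fun T => (T ∩ A, T ∩ B)) (fun PQ => PQ.1 ∪ PQ.2) ?_ ?_ ?_ ?_
  · intro T hT
    simp only [mem_coe, mem_filter, mem_powerset, mem_product] at hT ⊢
    rw [← inter_union_distrib_left, inter_eq_left.mpr hT.1]
    exact ⟨⟨inter_subset_right, inter_subset_right⟩, hT.2⟩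
  · intro PQ h
    simp only [mem_coe, mem_filter, mem_powerset, mem_product] at h ⊢
    exact ⟨union_subset_union h.1.1 h.1.2, h.2⟩
  · intro T hT
    simp only [mem_coe, mem_filter, mem_powerset] at hT
    exact (inter_union_distrib_left T A B).symm.trans (inter_eq_left.mpr hT.1)
  · rintro ⟨P, Q⟩ h
    simp only [mem_coe, mem_filter, mem_powerset, mem_product] at h
    refine Prod.ext ?_ ?_ <;> dsimp only
    · rw [union_inter_distrib_right, inter_eq_left.mpr h.1.1,
        disjoint_iff_inter_eq_empty.mp (hAB.symm.mono_left h.1.2), union_empty]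
    · rw [union_inter_distrib_right, inter_eq_left.mpr h.1.2,
        disjoint_iff_inter_eq_empty.mp (hAB.mono_left h.1.1), empty_union]

lemma conv_card_filter {α β : Type*} (s : Finset α) (t : Finset β) (f : α → ℕ) (g : β → ℕ)
    (x : ℕ) :
    conv (fun u => #{a ∈ s | f a = u}) (fun v => #{b ∈ t | g b = v}) x
      = #{ab ∈ s ×ˢ t | f ab.1 + g ab.2 = x} := by
  rw [card_eq_sum_card_fiberwise (f := fun ab => f ab.1) (t := range (x + 1))]
  · refine sum_congr rfl fun u hu => ?_
    rw [← card_product, filter_filter]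
    congr 1
    ext ⟨a, b⟩
    simp only [mem_filter, mem_product]
    have := mem_range.mp hu
    grind
  · intro ab hab
    simp only [mem_coe, mem_filter] at hab
    dsimp only
    exact mem_range.mpr (by omega)

lemma knap_union {ι : Type*} [DecidableEq ι] {A B : Finset ι} (hAB : Disjoint A B)
    (w : ι → ℕ) : knap (A ∪ B) w = conv (knap A w) (knap B w) := by
  funext x
  have sum_union_of_mem {PQ : Finset ι × Finset ι} (hPQ : PQ ∈ A.powerset ×ˢ B.powerset) :
      ∑ i ∈ PQ.1 ∪ PQ.2, w i = ∑ i ∈ PQ.1, w i + ∑ i ∈ PQ.2, w i := by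
    obtain ⟨hP, hQ⟩ := mem_product.mp hPQ
    exact sum_union ((hAB.mono_left (mem_powerset.mp hP)).mono_right (mem_powerset.mp hQ))
  rw [knap, card_filter_powerset_union hAB,
    filter_congr fun PQ hPQ => by rw [sum_union_of_mem hPQ]]
  exact (conv_card_filter _ _ (fun T => ∑ i ∈ T, w i) (fun T => ∑ i ∈ T, w i) x).symm

theorem knap_union_conv_sum_approx {ι : Type*} [DecidableEq ι]
    (A B : Finset ι) (hAB : Disjoint A B) (w : ι → ℕ) (ε : ℝ) (hε : 0 < ε)
    (F G : ℕ → ℕ) (hF : IsSumApprox ε F (knap A w))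
    (hG : IsSumApprox ε G (knap B w)) :
    ∀ x, (psum (knap (A ∪ B) w) x : ℝ) ≤ psum (conv F G) x ∧
      (psum (conv F G) x : ℝ) ≤ (1 + ε) ^ 2 * psum (knap (A ∪ B) w) x := by
  rw [knap_union hAB, show (1 + ε) ^ 2 = 1 + (ε + ε + ε * ε) by ring]
  exact isSumApprox_conv (by linarith) hF hG
end
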